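/- Let H be a Hopf algebra over a field k and N ⊆ P a cleft extension with cleaving map γ and convolution inverse γ⁻¹. Then for every p ∈ P, the element γ⁻¹(p₍₋₁₎)p₍₀₎ lies in N = P^{coH}, and the map Φ : P → H ⊗ N, Φ(p) = p₍₋₂₎ ⊗ γ⁻¹(p₍₋₁₎)p₍₀₎, is a bijection, with inverse Φ⁻¹(h ⊗ n) = γ(h)n; moreover Φ is left H-colinear and right N-linear, so P has the normal basis property. -/
import Mathlib

set_option maxHeartbeats 1000000
set_option synthInstance.maxHeartbeats 400000


open TensorProduct

noncomputable section

section Defs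

variable (k : Type*) [Field k] (H : Type*) [Ring H] [Bialgebra k H]
  (P : Type*) [Ring P] [Algebra k P]

/-- The coinvariant submodule `N = P^{coH}`. -/
def coinvSub (δ : P →ₗ[k] H ⊗[k] P) : Submodule k P :=
  LinearMap.ker (δ - TensorProduct.mk k H P 1)

/-- `Φ(p) = p₍₋₂₎ ⊗ γ⁻¹(p₍₋₁₎) p₍₀₎`, viewed as a map into `H ⊗ P`. -/
def PhiMap (δ : P →ₗ[k] H ⊗[k] P) (γ' : H →ₗ[k] P) : P →ₗ[k] H ⊗[k] P :=
  TensorProduct.map LinearMap.id ((LinearMap.mul' k P) ∘ₗ TensorProduct.map γ' LinearMap.id)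
    ∘ₗ TensorProduct.map LinearMap.id δ ∘ₗ δ

/-- `Ψ(h ⊗ q) = γ(h) q`. -/
def PsiMap (γ : H →ₗ[k] P) : H ⊗[k] P →ₗ[k] P :=
  (LinearMap.mul' k P) ∘ₗ TensorProduct.map γ LinearMap.id

end Defs


noncomputable section
section ConvAux

variable {k : Type*} [Field k] {H : Type*} [Ring H] [Bialgebra k H]
  {A : Type*} [Ring A] [Algebra k A]

/-- Convolution product on `Hom(H, A)`. -/
def conv (f g : H →ₗ[k] A) : H →ₗ[k] A :=
  LinearMap.mul' k A ∘ₗ TensorProduct.map f g ∘ₗ Coalgebra.comul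

/-- Convolution unit. -/
def convUnit : H →ₗ[k] A := Algebra.linearMap k A ∘ₗ Coalgebra.counit

lemma conv_def' (f g : H →ₗ[k] A) :
    conv f g = (LinearMap.mul' k A ∘ₗ TensorProduct.map f g) ∘ₗ Coalgebra.comul := by
  rw [conv, LinearMap.comp_assoc]

lemma conv_unit_left (f : H →ₗ[k] A) : conv convUnit f = f := by
  have h1 : conv convUnit f = (LinearMap.mul' k A
      ∘ₗ TensorProduct.map (Algebra.linearMap k A) f)
      ∘ₗ (LinearMap.rTensor H (Coalgebra.counit (R := k) (A := H)) ∘ₗ Coalgebra.comul) := by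
    rw [conv_def']
    simp only [← LinearMap.comp_assoc]
    congr 1
    rw [LinearMap.comp_assoc, LinearMap.map_comp_rTensor]
    rfl
  rw [h1, Coalgebra.rTensor_counit_comp_comul]
  ext h
  simp [Algebra.algebraMap_eq_smul_one]

lemma conv_unit_right (f : H →ₗ[k] A) : conv f convUnit = f := by
  have h1 : conv f convUnit = (LinearMap.mul' k A
      ∘ₗ TensorProduct.map f (Algebra.linearMap k A))
      ∘ₗ (LinearMap.lTensor H (Coalgebra.counit (R := k) (A := H)) ∘ₗ Coalgebra.comul) := by
    rw [conv_def']
    simp only [← LinearMap.comp_assoc]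
    congr 1
    rw [LinearMap.comp_assoc, LinearMap.map_comp_lTensor]
    rfl
  rw [h1, Coalgebra.lTensor_counit_comp_comul]
  ext h
  simp [Algebra.algebraMap_eq_smul_one, Algebra.TensorProduct.tmul_mul_tmul]

lemma conv_assoc (f g h : H →ₗ[k] A) : conv (conv f g) h = conv f (conv g h) := by
  have key : LinearMap.mul' k A
        ∘ₗ TensorProduct.map (LinearMap.mul' k A ∘ₗ TensorProduct.map f g) h
      = (LinearMap.mul' k A
          ∘ₗ TensorProduct.map f (LinearMap.mul' k A ∘ₗ TensorProduct.map g h))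
        ∘ₗ (TensorProduct.assoc k H H H).toLinearMap := by
    apply TensorProduct.ext_threefold
    intro x y z
    simp [mul_assoc]
  rw [conv_def' (conv f g) h, conv_def' f g, conv_def' f (conv g h), conv_def' g h,
    ← LinearMap.map_comp_rTensor, ← LinearMap.map_comp_lTensor,
    ← LinearMap.comp_assoc _ _ (LinearMap.mul' k A),
    ← LinearMap.comp_assoc _ _ (LinearMap.mul' k A), key]
  simp only [LinearMap.comp_assoc]
  rw [← Coalgebra.coassoc (R := k) (A := H)]

lemma conv_inv_unique {f g g' : H →ₗ[k] A} (h1 : conv f g = convUnit)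
    (h2 : conv g' f = convUnit) : g = g' := by
  have h3 : conv g' (conv f g) = conv (conv g' f) g := (conv_assoc g' f g).symm
  rw [h1, h2, conv_unit_right, conv_unit_left] at h3
  exact h3.symm

end ConvAux
section IncAux

variable {k : Type*} [Field k] {H : Type*} [Ring H] [Bialgebra k H]
  {P : Type*} [Ring P] [Algebra k P]

/-- `h ↦ h ⊗ 1`. -/
def inc1 : H →ₗ[k] H ⊗[k] P := (TensorProduct.mk k H P).flip 1

/-- `p ↦ 1 ⊗ p`. -/
def inc2 : P →ₗ[k] H ⊗[k] P := TensorProduct.mk k H P 1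

@[simp] lemma inc1_apply (h : H) : (inc1 (k := k) (P := P) h) = h ⊗ₜ[k] 1 := rfl
@[simp] lemma inc2_apply (p : P) : (inc2 (k := k) (H := H) p) = 1 ⊗ₜ[k] p := rfl

lemma conv_inc1 (f g : H →ₗ[k] H) :
    conv (A := H ⊗[k] P) (inc1 ∘ₗ f) (inc1 ∘ₗ g)
      = inc1 ∘ₗ (LinearMap.mul' k H ∘ₗ TensorProduct.map f g ∘ₗ Coalgebra.comul) := by
  have h1 : LinearMap.mul' k (H ⊗[k] P) ∘ₗ TensorProduct.map (inc1 (k := k) (P := P)) inc1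
      = inc1 ∘ₗ LinearMap.mul' k H :=
    TensorProduct.ext' fun x y => by
      simp [Algebra.TensorProduct.tmul_mul_tmul]
  rw [conv, TensorProduct.map_comp]
  simp only [← LinearMap.comp_assoc]
  rw [h1]

lemma conv_inc2 (f g : H →ₗ[k] P) :
    conv (A := H ⊗[k] P) (inc2 ∘ₗ f) (inc2 ∘ₗ g)
      = inc2 ∘ₗ (LinearMap.mul' k P ∘ₗ TensorProduct.map f g ∘ₗ Coalgebra.comul) := by
  have h1 : LinearMap.mul' k (H ⊗[k] P) ∘ₗ TensorProduct.map (inc2 (k := k) (H := H)) inc2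
      = inc2 ∘ₗ LinearMap.mul' k P :=
    TensorProduct.ext' fun x y => by
      simp [Algebra.TensorProduct.tmul_mul_tmul]
  rw [conv, TensorProduct.map_comp]
  simp only [← LinearMap.comp_assoc]
  rw [h1]

lemma conv_inc1_inc2 (g : H →ₗ[k] P) :
    conv (A := H ⊗[k] P) inc1 (inc2 ∘ₗ g)
      = TensorProduct.map LinearMap.id g ∘ₗ Coalgebra.comul := by
  have h1 : LinearMap.mul' k (H ⊗[k] P)
        ∘ₗ TensorProduct.map (inc1 (k := k) (P := P)) (inc2 (k := k) (H := H))
      = LinearMap.id :=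
    TensorProduct.ext' fun x y => by
      simp [Algebra.TensorProduct.tmul_mul_tmul]
  have : (inc1 : H →ₗ[k] H ⊗[k] P) = inc1 ∘ₗ LinearMap.id := rfl
  rw [conv, this, TensorProduct.map_comp]
  simp only [← LinearMap.comp_assoc]
  rw [h1]
  simp only [LinearMap.id_comp]

lemma inc1_comp_unit :
    (inc1 : H →ₗ[k] H ⊗[k] P) ∘ₗ Algebra.linearMap k H = Algebra.linearMap k (H ⊗[k] P) := by
  ext c
  simp [Algebra.TensorProduct.algebraMap_apply]

lemma inc2_comp_unit :
    (inc2 : P →ₗ[k] H ⊗[k] P) ∘ₗ Algebra.linearMap k P = Algebra.linearMap k (H ⊗[k] P) := by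
  ext c
  simp [Algebra.TensorProduct.algebraMap_apply, Algebra.algebraMap_eq_smul_one,
    TensorProduct.smul_tmul, Algebra.TensorProduct.one_def]

end IncAux

section IncAux2
variable {k : Type*} [Field k] {H : Type*} [Ring H] [HopfAlgebra k H]
  {P : Type*} [Ring P] [Algebra k P]

lemma conv_incS :
    conv (A := H ⊗[k] P) (inc1 ∘ₗ (HopfAlgebra.antipode (R := k) (A := H))) inc1 = convUnit := by
  have : (inc1 : H →ₗ[k] H ⊗[k] P) = inc1 ∘ₗ LinearMap.id := rfl
  nth_rewrite 2 [this]
  rw [conv_inc1]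
  rw [show (TensorProduct.map (HopfAlgebra.antipode (R := k) (A := H)) LinearMap.id)
    = LinearMap.rTensor H (HopfAlgebra.antipode (R := k) (A := H)) from rfl]
  rw [HopfAlgebra.mul_antipode_rTensor_comul, ← LinearMap.comp_assoc, inc1_comp_unit]
  rfl

end IncAux2

section MainAux

variable {k : Type*} [Field k] {H : Type*} [Ring H] [HopfAlgebra k H]
  {P : Type*} [Ring P] [Algebra k P]

/-- `ρ(h ⊗ q) = γ'(h) q`. -/
def rho (γ' : H →ₗ[k] P) : H ⊗[k] P →ₗ[k] P :=
  (LinearMap.mul' k P) ∘ₗ TensorProduct.map γ' LinearMap.id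

@[simp] lemma rho_tmul (γ' : H →ₗ[k] P) (h : H) (q : P) : rho γ' (h ⊗ₜ[k] q) = γ' h * q := rfl

variable (δ : P →ₗ[k] H ⊗[k] P) (γ γ' : H →ₗ[k] P)

lemma PhiMap_eq : PhiMap k H P δ γ' = TensorProduct.map LinearMap.id (rho γ' ∘ₗ δ) ∘ₗ δ := by
  unfold PhiMap rho
  rw [← LinearMap.comp_assoc, ← TensorProduct.map_comp, LinearMap.id_comp]

section WithHyps

variable (hcoassoc : (TensorProduct.map (Coalgebra.comul (R := k) (A := H)) LinearMap.id) ∘ₗ δ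
      = (TensorProduct.assoc k H H P).symm.toLinearMap
          ∘ₗ (TensorProduct.map LinearMap.id δ) ∘ₗ δ)
  (hmulc : ∀ p q : P, δ (p * q) = δ p * δ q)
  (hone : δ 1 = 1)
  (hcolin : δ ∘ₗ γ
      = TensorProduct.map LinearMap.id γ ∘ₗ (Coalgebra.comul (R := k) (A := H)))
  (hconv₁ : (LinearMap.mul' k P) ∘ₗ TensorProduct.map γ γ'
        ∘ₗ (Coalgebra.comul (R := k) (A := H))
      = (Algebra.linearMap k P) ∘ₗ (Coalgebra.counit (R := k) (A := H)))
  (hconv₂ : (LinearMap.mul' k P) ∘ₗ TensorProduct.map γ' γ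
        ∘ₗ (Coalgebra.comul (R := k) (A := H))
      = (Algebra.linearMap k P) ∘ₗ (Coalgebra.counit (R := k) (A := H)))

include hmulc in
lemma L_δmul : δ ∘ₗ LinearMap.mul' k P = LinearMap.mul' k (H ⊗[k] P) ∘ₗ TensorProduct.map δ δ :=
  TensorProduct.ext' fun p q => by simp [hmulc p q]

include hmulc hone in
omit hmulc in
lemma L_δunit : δ ∘ₗ Algebra.linearMap k P = Algebra.linearMap k (H ⊗[k] P) := by
  ext c
  simp only [LinearMap.comp_apply, Algebra.linearMap_apply, Algebra.algebraMap_eq_smul_one,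
    map_smul, hone]

include hcoassoc in
lemma L_coassoc' : (TensorProduct.assoc k H H P).toLinearMap
      ∘ₗ TensorProduct.map (Coalgebra.comul (R := k) (A := H)) LinearMap.id ∘ₗ δ
    = TensorProduct.map LinearMap.id δ ∘ₗ δ := by
  rw [hcoassoc]
  ext p
  simp

include hmulc hone hconv₁ in
lemma L_convA : conv (δ ∘ₗ γ) (δ ∘ₗ γ') = convUnit := by
  rw [conv, TensorProduct.map_comp]
  calc LinearMap.mul' k (H ⊗[k] P)
        ∘ₗ (TensorProduct.map δ δ ∘ₗ TensorProduct.map γ γ') ∘ₗ Coalgebra.comul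
      = ((LinearMap.mul' k (H ⊗[k] P) ∘ₗ TensorProduct.map δ δ)
          ∘ₗ TensorProduct.map γ γ') ∘ₗ Coalgebra.comul := by
        simp only [LinearMap.comp_assoc]
    _ = ((δ ∘ₗ LinearMap.mul' k P) ∘ₗ TensorProduct.map γ γ') ∘ₗ Coalgebra.comul := by
        rw [← L_δmul δ hmulc]
    _ = δ ∘ₗ (LinearMap.mul' k P ∘ₗ TensorProduct.map γ γ'
          ∘ₗ (Coalgebra.comul (R := k) (A := H))) := by
        simp only [LinearMap.comp_assoc]
    _ = δ ∘ₗ (Algebra.linearMap k P ∘ₗ Coalgebra.counit) := by rw [hconv₁]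
    _ = (δ ∘ₗ Algebra.linearMap k P) ∘ₗ Coalgebra.counit := by
        simp only [LinearMap.comp_assoc]
    _ = convUnit := by rw [L_δunit δ hone]; rfl

include hcolin in
lemma L_δγ : δ ∘ₗ γ = conv inc1 (inc2 ∘ₗ γ) := by
  rw [hcolin, conv_inc1_inc2]

lemma L_βinc : conv (conv (inc2 ∘ₗ γ') (inc1 ∘ₗ (HopfAlgebra.antipode (R := k) (A := H)))) inc1
    = inc2 ∘ₗ γ' := by
  rw [conv_assoc, conv_incS, conv_unit_right]

include hcolin hconv₂ in
lemma L_convB : conv (conv (inc2 ∘ₗ γ') (inc1 ∘ₗ (HopfAlgebra.antipode (R := k) (A := H))))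
    (δ ∘ₗ γ) = convUnit := by
  rw [L_δγ δ γ hcolin, ← conv_assoc, L_βinc, conv_inc2, hconv₂,
    ← LinearMap.comp_assoc, inc2_comp_unit]
  rfl

include hmulc hone hcolin hconv₁ hconv₂ in
lemma L_C : δ ∘ₗ γ' = conv (inc2 ∘ₗ γ') (inc1 ∘ₗ (HopfAlgebra.antipode (R := k) (A := H))) :=
  conv_inv_unique (L_convA δ γ γ' hmulc hone hconv₁) (L_convB δ γ γ' hcolin hconv₂)

include hcoassoc hmulc hone hcolin hconv₁ hconv₂ in
lemma L_theta_coinv : δ ∘ₗ (rho γ' ∘ₗ δ) = TensorProduct.mk k H P 1 ∘ₗ (rho γ' ∘ₗ δ) := by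
  set β := conv (inc2 ∘ₗ γ') (inc1 ∘ₗ (HopfAlgebra.antipode (R := k) (A := H))) with hβ
  have hδρ : δ ∘ₗ rho γ' = LinearMap.mul' k (H ⊗[k] P) ∘ₗ TensorProduct.map β δ := by
    rw [rho, ← LinearMap.comp_assoc, L_δmul δ hmulc, LinearMap.comp_assoc,
      ← TensorProduct.map_comp, LinearMap.comp_id,
      L_C δ γ γ' hmulc hone hcolin hconv₁ hconv₂]
  have hsplit : TensorProduct.map β δ
      = TensorProduct.map β (LinearMap.id (M := H ⊗[k] P))
        ∘ₗ TensorProduct.map LinearMap.id δ := by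
    simp only [← TensorProduct.map_comp, LinearMap.comp_id, LinearMap.id_comp]
  have core : LinearMap.mul' k (H ⊗[k] P)
        ∘ₗ TensorProduct.map β (LinearMap.id (M := H ⊗[k] P))
        ∘ₗ (TensorProduct.assoc k H H P).toLinearMap
        ∘ₗ TensorProduct.map (Coalgebra.comul (R := k) (A := H)) LinearMap.id
      = TensorProduct.mk k H P 1 ∘ₗ rho γ' := by
    apply TensorProduct.ext'
    intro h q
    have sub : ∀ w : H ⊗[k] H,
        LinearMap.mul' k (H ⊗[k] P) (TensorProduct.map β (LinearMap.id (M := H ⊗[k] P))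
          ((TensorProduct.assoc k H H P) (w ⊗ₜ[k] q)))
        = LinearMap.mul' k (H ⊗[k] P) (TensorProduct.map β inc1 w) * ((1 : H) ⊗ₜ[k] q) := by
      intro w
      induction w using TensorProduct.induction_on with
      | zero => simp only [TensorProduct.zero_tmul, map_zero, zero_mul]
      | tmul x y =>
        simp only [TensorProduct.assoc_tmul, TensorProduct.map_tmul, LinearMap.id_coe, id_eq,
          LinearMap.mul'_apply, inc1_apply, mul_assoc,
          Algebra.TensorProduct.tmul_mul_tmul, mul_one, one_mul]
      | add w₁ w₂ ih₁ ih₂ =>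
        simp only [TensorProduct.add_tmul, map_add, add_mul, ih₁, ih₂]
    simp only [LinearMap.comp_apply, TensorProduct.map_tmul, LinearMap.id_coe, id_eq,
      LinearEquiv.coe_coe]
    rw [sub (Coalgebra.comul h)]
    have h0 : LinearMap.mul' k (H ⊗[k] P) (TensorProduct.map β inc1 (Coalgebra.comul h))
        = conv β inc1 h := rfl
    rw [h0, L_βinc]
    simp [Algebra.TensorProduct.tmul_mul_tmul]
  calc δ ∘ₗ (rho γ' ∘ₗ δ)
      = (δ ∘ₗ rho γ') ∘ₗ δ := by simp only [LinearMap.comp_assoc]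
    _ = (LinearMap.mul' k (H ⊗[k] P)
          ∘ₗ (TensorProduct.map β (LinearMap.id (M := H ⊗[k] P))
            ∘ₗ TensorProduct.map LinearMap.id δ)) ∘ₗ δ := by
        rw [hδρ, hsplit]
    _ = LinearMap.mul' k (H ⊗[k] P)
          ∘ₗ TensorProduct.map β (LinearMap.id (M := H ⊗[k] P))
          ∘ₗ TensorProduct.map LinearMap.id δ ∘ₗ δ := by
        simp only [LinearMap.comp_assoc]
    _ = LinearMap.mul' k (H ⊗[k] P)
          ∘ₗ TensorProduct.map β (LinearMap.id (M := H ⊗[k] P))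
          ∘ₗ (TensorProduct.assoc k H H P).toLinearMap
          ∘ₗ TensorProduct.map (Coalgebra.comul (R := k) (A := H)) LinearMap.id ∘ₗ δ := by
        rw [← L_coassoc' δ hcoassoc]
    _ = (LinearMap.mul' k (H ⊗[k] P)
          ∘ₗ TensorProduct.map β (LinearMap.id (M := H ⊗[k] P))
          ∘ₗ (TensorProduct.assoc k H H P).toLinearMap
          ∘ₗ TensorProduct.map (Coalgebra.comul (R := k) (A := H)) LinearMap.id) ∘ₗ δ := by
        simp only [LinearMap.comp_assoc]
    _ = (TensorProduct.mk k H P 1 ∘ₗ rho γ') ∘ₗ δ := by rw [core]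
    _ = TensorProduct.mk k H P 1 ∘ₗ (rho γ' ∘ₗ δ) := by simp only [LinearMap.comp_assoc]

lemma L_M : ∀ (w : H ⊗[k] P) (m : P), rho γ' (w * ((1 : H) ⊗ₜ[k] m)) = rho γ' w * m := by
  intro w m
  induction w using TensorProduct.induction_on with
  | zero => simp
  | tmul x y => simp [Algebra.TensorProduct.tmul_mul_tmul, mul_assoc]
  | add w₁ w₂ ih₁ ih₂ => simp only [add_mul, map_add, ih₁, ih₂]

include hmulc hcolin hconv₂ in
lemma L_theta_gamma : ∀ (g : H) (m : P), δ m = (1 : H) ⊗ₜ[k] m →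
    rho γ' (δ (γ g * m)) = Coalgebra.counit (R := k) g • m := by
  intro g m hm
  rw [hmulc, hm]
  have h1 : δ (γ g) = TensorProduct.map LinearMap.id γ (Coalgebra.comul g) :=
    LinearMap.congr_fun hcolin g
  rw [h1, L_M]
  have h2 : rho γ' ∘ₗ TensorProduct.map LinearMap.id γ
      = LinearMap.mul' k P ∘ₗ TensorProduct.map γ' γ := by
    rw [rho, LinearMap.comp_assoc]
    simp only [← TensorProduct.map_comp, LinearMap.comp_id, LinearMap.id_comp]
  have h3 : rho γ' (TensorProduct.map LinearMap.id γ (Coalgebra.comul g))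
      = LinearMap.mul' k P (TensorProduct.map γ' γ (Coalgebra.comul g)) := by
    have := LinearMap.congr_fun h2 (Coalgebra.comul g)
    simpa using this
  rw [h3]
  have h4 := LinearMap.congr_fun hconv₂ g
  simp only [LinearMap.comp_apply] at h4
  rw [h4, Algebra.linearMap_apply, ← Algebra.smul_def]

include hmulc hcolin hconv₂ in
lemma L_phi_gamma : ∀ (h : H) (n : P), δ n = (1 : H) ⊗ₜ[k] n →
    PhiMap k H P δ γ' (γ h * n) = h ⊗ₜ[k] n := by
  intro h n hn
  rw [PhiMap_eq]
  simp only [LinearMap.comp_apply]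
  rw [hmulc, hn]
  have h1 : δ (γ h) = TensorProduct.map LinearMap.id γ (Coalgebra.comul h) :=
    LinearMap.congr_fun hcolin h
  rw [h1]
  have sub : ∀ w : H ⊗[k] H,
      TensorProduct.map LinearMap.id (rho γ' ∘ₗ δ)
        ((TensorProduct.map LinearMap.id γ w) * ((1 : H) ⊗ₜ[k] n))
      = TensorProduct.map LinearMap.id
          (LinearMap.toSpanSingleton k P n ∘ₗ Coalgebra.counit (R := k) (A := H)) w := by
    intro w
    induction w using TensorProduct.induction_on with
    | zero => simp
    | tmul x y =>
      simp only [TensorProduct.map_tmul, LinearMap.id_coe, id_eq,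
        Algebra.TensorProduct.tmul_mul_tmul, one_mul, LinearMap.comp_apply]
      rw [L_theta_gamma δ γ γ' hmulc hcolin hconv₂ y n hn]
      simp [LinearMap.toSpanSingleton_apply]
    | add w₁ w₂ ih₁ ih₂ => simp only [add_mul, map_add, ih₁, ih₂]
  rw [sub (Coalgebra.comul h)]
  have h5 : TensorProduct.map (LinearMap.id (M := H))
        (LinearMap.toSpanSingleton k P n ∘ₗ Coalgebra.counit (R := k) (A := H))
      = TensorProduct.map LinearMap.id (LinearMap.toSpanSingleton k P n)
        ∘ₗ LinearMap.lTensor H (Coalgebra.counit (R := k) (A := H)) := by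
    rw [LinearMap.lTensor]
    simp only [← TensorProduct.map_comp, LinearMap.id_comp]
  rw [h5, LinearMap.comp_apply, Coalgebra.lTensor_counit_comul]
  simp

include hcoassoc hconv₁ in
lemma L_psi_phi : ∀ p : P,
    (∀ q : P, (TensorProduct.lid k P)
      ((TensorProduct.map (Coalgebra.counit (R := k) (A := H)) LinearMap.id) (δ q)) = q) →
    PsiMap k H P γ (PhiMap k H P δ γ' p) = p := by
  intro p hcounit
  have e1 : TensorProduct.map γ (LinearMap.id (M := P)) ∘ₗ
      TensorProduct.map LinearMap.id (rho γ' ∘ₗ δ)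
      = TensorProduct.map γ (rho γ') ∘ₗ TensorProduct.map LinearMap.id δ := by
    simp only [← TensorProduct.map_comp, LinearMap.comp_id, LinearMap.id_comp]
  have key3a : LinearMap.mul' k P ∘ₗ TensorProduct.map γ (rho γ')
        ∘ₗ (TensorProduct.assoc k H H P).toLinearMap
      = LinearMap.mul' k P
        ∘ₗ TensorProduct.map (LinearMap.mul' k P ∘ₗ TensorProduct.map γ γ') LinearMap.id := by
    apply TensorProduct.ext_threefold
    intro x y z
    simp [mul_assoc]
  have e2 : TensorProduct.map (LinearMap.mul' k P ∘ₗ TensorProduct.map γ γ')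
        (LinearMap.id (M := P))
        ∘ₗ TensorProduct.map (Coalgebra.comul (R := k) (A := H)) LinearMap.id
      = TensorProduct.map (Algebra.linearMap k P ∘ₗ Coalgebra.counit (R := k) (A := H))
        LinearMap.id := by
    simp only [← TensorProduct.map_comp, LinearMap.comp_id]
    rw [LinearMap.comp_assoc, hconv₁]
  have e3 : LinearMap.mul' k P
        ∘ₗ TensorProduct.map (Algebra.linearMap k P ∘ₗ Coalgebra.counit (R := k) (A := H))
          LinearMap.id
      = (TensorProduct.lid k P).toLinearMap
        ∘ₗ TensorProduct.map (Coalgebra.counit (R := k) (A := H)) LinearMap.id := by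
    apply TensorProduct.ext'
    intro h q
    simp [Algebra.smul_def]
  have key : PsiMap k H P γ ∘ₗ PhiMap k H P δ γ'
      = (TensorProduct.lid k P).toLinearMap
        ∘ₗ TensorProduct.map (Coalgebra.counit (R := k) (A := H)) LinearMap.id ∘ₗ δ := by
    rw [PhiMap_eq, PsiMap]
    calc (LinearMap.mul' k P ∘ₗ TensorProduct.map γ LinearMap.id)
          ∘ₗ TensorProduct.map LinearMap.id (rho γ' ∘ₗ δ) ∘ₗ δ
        = (LinearMap.mul' k P ∘ₗ (TensorProduct.map γ (LinearMap.id (M := P))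
            ∘ₗ TensorProduct.map LinearMap.id (rho γ' ∘ₗ δ))) ∘ₗ δ := by
          simp only [LinearMap.comp_assoc]
      _ = (LinearMap.mul' k P ∘ₗ (TensorProduct.map γ (rho γ')
            ∘ₗ TensorProduct.map LinearMap.id δ)) ∘ₗ δ := by rw [e1]
      _ = LinearMap.mul' k P ∘ₗ TensorProduct.map γ (rho γ')
            ∘ₗ TensorProduct.map LinearMap.id δ ∘ₗ δ := by
          simp only [LinearMap.comp_assoc]
      _ = LinearMap.mul' k P ∘ₗ TensorProduct.map γ (rho γ')
            ∘ₗ (TensorProduct.assoc k H H P).toLinearMap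
            ∘ₗ TensorProduct.map (Coalgebra.comul (R := k) (A := H)) LinearMap.id ∘ₗ δ := by
          rw [← L_coassoc' δ hcoassoc]
      _ = ((LinearMap.mul' k P ∘ₗ TensorProduct.map γ (rho γ')
            ∘ₗ (TensorProduct.assoc k H H P).toLinearMap)
            ∘ₗ TensorProduct.map (Coalgebra.comul (R := k) (A := H)) LinearMap.id) ∘ₗ δ := by
          simp only [LinearMap.comp_assoc]
      _ = ((LinearMap.mul' k P
            ∘ₗ TensorProduct.map (LinearMap.mul' k P ∘ₗ TensorProduct.map γ γ') LinearMap.id)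
            ∘ₗ TensorProduct.map (Coalgebra.comul (R := k) (A := H)) LinearMap.id) ∘ₗ δ := by
          rw [key3a]
      _ = (LinearMap.mul' k P
            ∘ₗ (TensorProduct.map (LinearMap.mul' k P ∘ₗ TensorProduct.map γ γ')
              (LinearMap.id (M := P))
            ∘ₗ TensorProduct.map (Coalgebra.comul (R := k) (A := H)) LinearMap.id)) ∘ₗ δ := by
          simp only [LinearMap.comp_assoc]
      _ = (LinearMap.mul' k P
            ∘ₗ TensorProduct.map (Algebra.linearMap k P ∘ₗ Coalgebra.counit (R := k) (A := H))
              LinearMap.id) ∘ₗ δ := by rw [e2]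
      _ = ((TensorProduct.lid k P).toLinearMap
            ∘ₗ TensorProduct.map (Coalgebra.counit (R := k) (A := H)) LinearMap.id) ∘ₗ δ := by
          rw [e3]
      _ = (TensorProduct.lid k P).toLinearMap
            ∘ₗ TensorProduct.map (Coalgebra.counit (R := k) (A := H)) LinearMap.id ∘ₗ δ := by
          simp only [LinearMap.comp_assoc]
  have h6 := LinearMap.congr_fun key p
  simp only [LinearMap.comp_apply, LinearEquiv.coe_coe] at h6
  rw [h6]
  exact hcounit p

include hcoassoc in
lemma L_colinear : (TensorProduct.assoc k H H P).toLinearMap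
      ∘ₗ TensorProduct.map (Coalgebra.comul (R := k) (A := H)) LinearMap.id
      ∘ₗ PhiMap k H P δ γ'
    = TensorProduct.map LinearMap.id (PhiMap k H P δ γ') ∘ₗ δ := by
  rw [PhiMap_eq]
  have e1 : TensorProduct.map (Coalgebra.comul (R := k) (A := H)) (LinearMap.id (M := P))
        ∘ₗ TensorProduct.map LinearMap.id (rho γ' ∘ₗ δ)
      = TensorProduct.map (LinearMap.id (M := H ⊗[k] H)) (rho γ' ∘ₗ δ)
        ∘ₗ TensorProduct.map (Coalgebra.comul (R := k) (A := H)) LinearMap.id := by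
    simp only [← TensorProduct.map_comp, LinearMap.comp_id, LinearMap.id_comp]
  have e2 : (TensorProduct.assoc k H H P).toLinearMap
        ∘ₗ TensorProduct.map (LinearMap.id (M := H ⊗[k] H)) (rho γ' ∘ₗ δ)
      = TensorProduct.map LinearMap.id (TensorProduct.map LinearMap.id (rho γ' ∘ₗ δ))
        ∘ₗ (TensorProduct.assoc k H H P).toLinearMap := by
    have e := TensorProduct.map_map_comp_assoc_eq (R := k) (LinearMap.id (M := H))
      (LinearMap.id (M := H)) (rho γ' ∘ₗ δ)
    rw [TensorProduct.map_id] at e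
    exact e.symm
  calc (TensorProduct.assoc k H H P).toLinearMap
        ∘ₗ TensorProduct.map (Coalgebra.comul (R := k) (A := H)) LinearMap.id
        ∘ₗ TensorProduct.map LinearMap.id (rho γ' ∘ₗ δ) ∘ₗ δ
      = ((TensorProduct.assoc k H H P).toLinearMap
          ∘ₗ (TensorProduct.map (Coalgebra.comul (R := k) (A := H)) (LinearMap.id (M := P))
            ∘ₗ TensorProduct.map LinearMap.id (rho γ' ∘ₗ δ))) ∘ₗ δ := by
        simp only [LinearMap.comp_assoc]
    _ = ((TensorProduct.assoc k H H P).toLinearMap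
          ∘ₗ (TensorProduct.map (LinearMap.id (M := H ⊗[k] H)) (rho γ' ∘ₗ δ)
            ∘ₗ TensorProduct.map (Coalgebra.comul (R := k) (A := H)) LinearMap.id)) ∘ₗ δ := by
        rw [e1]
    _ = (((TensorProduct.assoc k H H P).toLinearMap
          ∘ₗ TensorProduct.map (LinearMap.id (M := H ⊗[k] H)) (rho γ' ∘ₗ δ))
          ∘ₗ TensorProduct.map (Coalgebra.comul (R := k) (A := H)) LinearMap.id) ∘ₗ δ := by
        simp only [LinearMap.comp_assoc]
    _ = ((TensorProduct.map LinearMap.id (TensorProduct.map LinearMap.id (rho γ' ∘ₗ δ))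
          ∘ₗ (TensorProduct.assoc k H H P).toLinearMap)
          ∘ₗ TensorProduct.map (Coalgebra.comul (R := k) (A := H)) LinearMap.id) ∘ₗ δ := by
        rw [e2]
    _ = TensorProduct.map LinearMap.id (TensorProduct.map LinearMap.id (rho γ' ∘ₗ δ))
          ∘ₗ (TensorProduct.assoc k H H P).toLinearMap
          ∘ₗ TensorProduct.map (Coalgebra.comul (R := k) (A := H)) LinearMap.id ∘ₗ δ := by
        simp only [LinearMap.comp_assoc]
    _ = TensorProduct.map LinearMap.id (TensorProduct.map LinearMap.id (rho γ' ∘ₗ δ))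
          ∘ₗ TensorProduct.map LinearMap.id δ ∘ₗ δ := by
        rw [L_coassoc' δ hcoassoc]
    _ = (TensorProduct.map LinearMap.id (TensorProduct.map LinearMap.id (rho γ' ∘ₗ δ))
          ∘ₗ TensorProduct.map LinearMap.id δ) ∘ₗ δ := by
        simp only [LinearMap.comp_assoc]
    _ = TensorProduct.map LinearMap.id
          (TensorProduct.map LinearMap.id (rho γ' ∘ₗ δ) ∘ₗ δ) ∘ₗ δ := by
        congr 1
        simp only [← TensorProduct.map_comp, LinearMap.id_comp]

include hmulc in
lemma L_rightlinear : ∀ (p n : P), δ n = (1 : H) ⊗ₜ[k] n →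
    PhiMap k H P δ γ' (p * n)
      = (TensorProduct.map LinearMap.id (LinearMap.mulRight k n)) (PhiMap k H P δ γ' p) := by
  intro p n hn
  rw [PhiMap_eq]
  simp only [LinearMap.comp_apply]
  rw [hmulc, hn]
  have sub : ∀ w : H ⊗[k] P,
      TensorProduct.map LinearMap.id (rho γ' ∘ₗ δ) (w * ((1 : H) ⊗ₜ[k] n))
      = TensorProduct.map LinearMap.id (LinearMap.mulRight k n)
          (TensorProduct.map LinearMap.id (rho γ' ∘ₗ δ) w) := by
    intro w
    induction w using TensorProduct.induction_on with
    | zero => simp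
    | tmul x y =>
      simp only [Algebra.TensorProduct.tmul_mul_tmul, one_mul, TensorProduct.map_tmul,
        LinearMap.id_coe, id_eq, LinearMap.comp_apply, LinearMap.mulRight_apply, mul_one]
      rw [hmulc, hn, L_M]
    | add w₁ w₂ ih₁ ih₂ => simp only [add_mul, map_add, ih₁, ih₂]
  exact sub (δ p)

end WithHyps
end MainAux


/-- For a cleft extension `N ⊆ P` with cleaving map `γ`: for every `p`,
`γ⁻¹(p₍₋₁₎)p₍₀₎ ∈ N`, and `Φ(p) = p₍₋₂₎ ⊗ γ⁻¹(p₍₋₁₎)p₍₀₎` is a bijection of `P` onto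
`H ⊗ N` with inverse `h ⊗ n ↦ γ(h)n`, which is left `H`-colinear and right `N`-linear;
hence `P` has the normal basis property. -/
theorem stmt14 (k : Type*) [Field k] (H : Type*) [Ring H] [HopfAlgebra k H]
    (P : Type*) [Ring P] [Algebra k P]
    (δ : P →ₗ[k] H ⊗[k] P)
    (hcoassoc : (TensorProduct.map (Coalgebra.comul (R := k) (A := H)) LinearMap.id) ∘ₗ δ
      = (TensorProduct.assoc k H H P).symm.toLinearMap
          ∘ₗ (TensorProduct.map LinearMap.id δ) ∘ₗ δ)
    (hcounit : ∀ p : P,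
      (TensorProduct.lid k P)
        ((TensorProduct.map (Coalgebra.counit (R := k) (A := H)) LinearMap.id) (δ p)) = p)
    (hmulc : ∀ p q : P, δ (p * q) = δ p * δ q)
    (hone : δ 1 = 1)
    (γ γ' : H →ₗ[k] P)
    (hγone : γ 1 = 1)
    (hcolin : δ ∘ₗ γ
      = TensorProduct.map LinearMap.id γ ∘ₗ (Coalgebra.comul (R := k) (A := H)))
    (hconv₁ : (LinearMap.mul' k P) ∘ₗ TensorProduct.map γ γ'
          ∘ₗ (Coalgebra.comul (R := k) (A := H))
        = (Algebra.linearMap k P) ∘ₗ (Coalgebra.counit (R := k) (A := H)))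
    (hconv₂ : (LinearMap.mul' k P) ∘ₗ TensorProduct.map γ' γ
          ∘ₗ (Coalgebra.comul (R := k) (A := H))
        = (Algebra.linearMap k P) ∘ₗ (Coalgebra.counit (R := k) (A := H))) :
    -- (1) `γ⁻¹(p₍₋₁₎)p₍₀₎` is coinvariant
    (∀ p : P,
      ((LinearMap.mul' k P) ∘ₗ TensorProduct.map γ' LinearMap.id) (δ p) ∈ coinvSub k H P δ)
    -- (2) Φ is injective with image `H ⊗ N`
    ∧ Function.Injective (PhiMap k H P δ γ')
    ∧ LinearMap.range (PhiMap k H P δ γ')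
        = LinearMap.range
            (TensorProduct.map (LinearMap.id : H →ₗ[k] H) (coinvSub k H P δ).subtype)
    -- (3) `h ⊗ n ↦ γ(h)n` is a two-sided inverse of Φ
    ∧ (∀ p : P, PsiMap k H P γ (PhiMap k H P δ γ' p) = p)
    ∧ (∀ (h : H) (n : P), n ∈ coinvSub k H P δ → PhiMap k H P δ γ' (γ h * n) = h ⊗ₜ[k] n)
    -- (4) Φ is left `H`-colinear
    ∧ (TensorProduct.assoc k H H P).toLinearMap
        ∘ₗ TensorProduct.map (Coalgebra.comul (R := k) (A := H)) LinearMap.id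
        ∘ₗ PhiMap k H P δ γ'
      = TensorProduct.map LinearMap.id (PhiMap k H P δ γ') ∘ₗ δ
    -- (5) Φ is right `N`-linear
    ∧ (∀ (p n : P), n ∈ coinvSub k H P δ →
        PhiMap k H P δ γ' (p * n)
          = (TensorProduct.map LinearMap.id (LinearMap.mulRight k n)) (PhiMap k H P δ γ' p)) := by
  have hN : ∀ n : P, n ∈ coinvSub k H P δ → δ n = (1 : H) ⊗ₜ[k] n := by
    intro n hn
    have h := hn
    simp only [coinvSub, LinearMap.mem_ker, LinearMap.sub_apply, sub_eq_zero,
      TensorProduct.mk_apply] at h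
    exact h
  have part1' : ∀ p : P, (rho γ' ∘ₗ δ) p ∈ coinvSub k H P δ := by
    intro p
    have h := LinearMap.congr_fun
      (L_theta_coinv δ γ γ' hcoassoc hmulc hone hcolin hconv₁ hconv₂) p
    simp only [LinearMap.comp_apply] at h
    simp only [coinvSub, LinearMap.mem_ker, LinearMap.sub_apply, sub_eq_zero,
      LinearMap.comp_apply]
    exact h
  have part1 : ∀ p : P,
      ((LinearMap.mul' k P) ∘ₗ TensorProduct.map γ' LinearMap.id) (δ p) ∈ coinvSub k H P δ :=
    fun p => part1' p
  have part3a : ∀ p, PsiMap k H P γ (PhiMap k H P δ γ' p) = p :=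
    fun p => L_psi_phi δ γ γ' hcoassoc hconv₁ p hcounit
  have part3b : ∀ (h : H) (n : P), n ∈ coinvSub k H P δ →
      PhiMap k H P δ γ' (γ h * n) = h ⊗ₜ[k] n :=
    fun h n hn => L_phi_gamma δ γ γ' hmulc hcolin hconv₂ h n (hN n hn)
  have inj : Function.Injective (PhiMap k H P δ γ') :=
    Function.LeftInverse.injective (g := PsiMap k H P γ) part3a
  have hrange : LinearMap.range (PhiMap k H P δ γ')
      = LinearMap.range
          (TensorProduct.map (LinearMap.id : H →ₗ[k] H) (coinvSub k H P δ).subtype) := by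
    apply le_antisymm
    · rintro x ⟨p, rfl⟩
      refine ⟨TensorProduct.map LinearMap.id
        (LinearMap.codRestrict (coinvSub k H P δ) (rho γ' ∘ₗ δ) part1') (δ p), ?_⟩
      have hcomp : TensorProduct.map (LinearMap.id : H →ₗ[k] H) (coinvSub k H P δ).subtype
          ∘ₗ TensorProduct.map LinearMap.id
            (LinearMap.codRestrict (coinvSub k H P δ) (rho γ' ∘ₗ δ) part1')
          = TensorProduct.map LinearMap.id (rho γ' ∘ₗ δ) := by
        simp only [← TensorProduct.map_comp, LinearMap.id_comp,
          LinearMap.subtype_comp_codRestrict]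
      have := LinearMap.congr_fun hcomp (δ p)
      simp only [LinearMap.comp_apply] at this
      rw [this, PhiMap_eq]
      rfl
    · rintro x ⟨z, rfl⟩
      induction z using TensorProduct.induction_on with
      | zero =>
        simp only [map_zero]
        exact (LinearMap.range (PhiMap k H P δ γ')).zero_mem
      | tmul h n =>
        refine ⟨γ h * (n : P), ?_⟩
        rw [part3b h (n : P) n.2]
        rfl
      | add a b iha ihb =>
        simp only [map_add]
        exact add_mem iha ihb
  refine ⟨part1, inj, hrange, part3a, part3b, L_colinear δ γ' hcoassoc,
    fun p n hn => L_rightlinear δ γ' hmulc p n (hN n hn)⟩
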